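/- arXiv:1306.4197 — 4 statements merged into one kernel-verified Lean document; each statement's English description precedes it below -/
import Mathlib

section
/- For each m ∈ ℕ, let P_m be the order-m Taylor expansion operator on smooth functions of n real variables: (P_m f)(v) = ∑_{|β| ≤ m} (v^β/β!) ∂^β f(0). Then for all s, t ∈ ℕ and smooth polynomial-extendable f, g, one has (P_s f)(P_t g) = P_{s+t}[(P_s f)g + f(P_t g) − fg]. -/
/-!
Since `P_s f P_t g - [(P_s f) g + f (P_t g) - f g] = (f - P_s f)(g - P_t g)`, it suffices that
`P_{s+t}` fixes `P_s f P_t g`, a polynomial of total degree at most `s + t`, and kills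
`(f - P_s f)(g - P_t g)`, a power series of order at least `(s + 1) + (t + 1)`.
-/

variable {n : ℕ} {R : Type*} [CommRing R]

/-- Truncation of a multivariate power series to total degree at most `m`
(the order-`m` Taylor expansion operator). -/
noncomputable def taylorTrunc (m : ℕ) (f : MvPowerSeries (Fin n) R) :
    MvPowerSeries (Fin n) R :=
  fun d => if (d.sum fun _ k => k) ≤ m then f d else 0

namespace MvPowerSeries

theorem coeff_taylorTrunc (m : ℕ) (f : MvPowerSeries (Fin n) R) (d : Fin n →₀ ℕ) :
    coeff d (taylorTrunc m f) = if d.degree ≤ m then coeff d f else 0 :=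
  rfl

theorem taylorTrunc_eq_coe_truncTotal (m : ℕ) (f : MvPowerSeries (Fin n) R) :
    taylorTrunc m f = truncTotal (m + 1) f := by
  ext d
  simp only [coeff_taylorTrunc, MvPolynomial.coeff_coe, coeff_truncTotal_eq_ite, Nat.lt_succ_iff]

theorem taylorTrunc_sub (m : ℕ) (f g : MvPowerSeries (Fin n) R) :
    taylorTrunc m (f - g) = taylorTrunc m f - taylorTrunc m g := by
  ext d
  simp only [coeff_taylorTrunc, map_sub]
  split_ifs <;> simp

theorem taylorTrunc_coe {m : ℕ} {p : MvPolynomial (Fin n) R} (hp : p.totalDegree ≤ m) :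
    taylorTrunc m (p : MvPowerSeries (Fin n) R) = p := by
  rw [taylorTrunc_eq_coe_truncTotal,
    (truncTotal_coe_eq_self_iff p m.succ_ne_zero).2 (Nat.lt_succ_of_le hp)]

theorem taylorTrunc_mul_taylorTrunc (s t : ℕ) (f g : MvPowerSeries (Fin n) R) :
    taylorTrunc (s + t) (taylorTrunc s f * taylorTrunc t g) =
      taylorTrunc s f * taylorTrunc t g := by
  rw [taylorTrunc_eq_coe_truncTotal s f, taylorTrunc_eq_coe_truncTotal t g,
    ← MvPolynomial.coe_mul]
  refine taylorTrunc_coe ((MvPolynomial.totalDegree_mul (truncTotal (s + 1) f)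
    (truncTotal (t + 1) g)).trans (add_le_add ?_ ?_)) <;>
    exact Nat.le_of_lt_succ (totalDegree_truncTotal_lt _ (Nat.succ_ne_zero _))

theorem taylorTrunc_eq_zero_of_lt_order {m : ℕ} {f : MvPowerSeries (Fin n) R}
    (hf : (m : ℕ∞) < f.order) : taylorTrunc m f = 0 := by
  ext d
  rw [coeff_taylorTrunc, map_zero]
  split_ifs with hd
  · exact coeff_of_lt_order (lt_of_le_of_lt (by exact_mod_cast hd) hf)
  · rfl

theorem succ_le_order_sub_taylorTrunc (m : ℕ) (f : MvPowerSeries (Fin n) R) :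
    ((m + 1 : ℕ) : ℕ∞) ≤ (f - taylorTrunc m f).order := by
  refine nat_le_order fun d hd => ?_
  rw [map_sub, coeff_taylorTrunc, if_pos (Nat.le_of_lt_succ hd), sub_self]

end MvPowerSeries

open MvPowerSeries in
theorem taylorTrunc_rotaBaxterFamily (s t : ℕ) (f g : MvPowerSeries (Fin n) R) :
    taylorTrunc s f * taylorTrunc t g =
      taylorTrunc (s + t)
        (taylorTrunc s f * g + f * taylorTrunc t g - f * g) := by
  have h_order : ((s + t : ℕ) : ℕ∞) <
      ((f - taylorTrunc s f) * (g - taylorTrunc t g)).order :=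
    calc ((s + t : ℕ) : ℕ∞) < ((s + 1 : ℕ) : ℕ∞) + ((t + 1 : ℕ) : ℕ∞) := by
          exact_mod_cast (by omega : s + t < s + 1 + (t + 1))
      _ ≤ (f - taylorTrunc s f).order + (g - taylorTrunc t g).order :=
          add_le_add (succ_le_order_sub_taylorTrunc s f) (succ_le_order_sub_taylorTrunc t g)
      _ ≤ _ := le_order_mul
  have h_split : taylorTrunc s f * g + f * taylorTrunc t g - f * g =
      taylorTrunc s f * taylorTrunc t g - (f - taylorTrunc s f) * (g - taylorTrunc t g) := by
    ring
  rw [h_split, taylorTrunc_sub, taylorTrunc_mul_taylorTrunc,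
    taylorTrunc_eq_zero_of_lt_order h_order, sub_zero]
end

section
/- Let H be a graded connected bialgebra over a field, A a commutative unital algebra, and P : A → A an idempotent linear operator satisfying the Rota–Baxter identity P(a)P(b) = P(P(a)b + aP(b) − ab), with both im(P) and ker(P) subalgebras. Then every algebra morphism (character) φ : H → A admits a Birkhoff decomposition φ = φ_-^{*-1} * φ_+ with φ_-(x) ∈ im(P) for all x of positive degree and φ_+(x) ∈ ker(P) for all x, where φ_- and φ_+ are defined recursively by φ_-(x) = −P(φ(x) + ∑ φ_-(x')φ(x'')) and φ_+(x) = (Id − P)(φ(x) + ∑ φ_-(x')φ(x'')), the sums running over the reduced coproduct Δ̃(x) = ∑ x' ⊗ x''. -/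
variable {R H A : Type*} [Field R] [Ring H] [Bialgebra R H]
  [CommRing A] [Algebra R A]

noncomputable def conv (f g : H →ₗ[R] A) : H →ₗ[R] A :=
  (LinearMap.mul' R A).comp ((TensorProduct.map f g).comp
    (Coalgebra.comul : H →ₗ[R] TensorProduct R H H))

noncomputable def convUnit : H →ₗ[R] A :=
  (Algebra.linearMap R A).comp (Coalgebra.counit : H →ₗ[R] R)

def IsCharacter (f : H →ₗ[R] A) : Prop :=
  f 1 = 1 ∧ ∀ x y : H, f (x * y) = f x * f y

def Connected (ℬ : ℕ → Submodule R H) : Prop :=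
  ℬ 0 ≤ Submodule.span R {(1 : H)}

def ComulGraded (ℬ : ℕ → Submodule R H) : Prop :=
  ∀ n : ℕ, ∀ x ∈ ℬ n, (Coalgebra.comul (R := R) x : TensorProduct R H H) ∈
    ⨆ (p : ℕ × ℕ) (_ : p.1 + p.2 = n),
      LinearMap.range (TensorProduct.map (ℬ p.1).subtype (ℬ p.2).subtype)

/-! Since `Δ` respects the grading, in degree `n` a convolution `f * σ` or `σ * f` with `σ`
vanishing in degree `0` only depends on `f` in degrees `< n`. By connectedness `φ - ε`
vanishes in degree `0`, so `φ₋ = ε ∘ π₀ - P (φ₋ * (φ - ε))` is a well-founded recursion, and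
`φ₋ = ε + σ` is convolution-invertible because its left and right inverses solve
`l = ε - l * σ` and `r = ε - σ * r`. With `φ₊ := φ₋ * φ`, in positive degree
`φ₊ = (Id - P) (φ₋ * φ - φ₋)` lies in `ker P` by idempotence, and in degree `0` it is a
multiple of `1 ∈ ker P`. -/

section GradedRecursion

variable {S M N : Type*} [Semiring S] [AddCommMonoid M] [Module S M] [AddCommMonoid N]
  [Module S N] {𝒜 : ℕ → Submodule S M}

theorem iterate_apply_eq_of_degreewise {F : (M →ₗ[S] N) → (M →ₗ[S] N)}
    (hF : ∀ n (g₁ g₂ : M →ₗ[S] N), (∀ p < n, ∀ x ∈ 𝒜 p, g₁ x = g₂ x) →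
      ∀ x ∈ 𝒜 n, F g₁ x = F g₂ x) (g₀ : M →ₗ[S] N) (n : ℕ) :
    ∀ k, n < k → ∀ x ∈ 𝒜 n, F^[k] g₀ x = F^[n + 1] g₀ x := by
  induction n using Nat.strong_induction_on with
  | _ n ih =>
    rintro (_ | m) hm x hx
    · omega
    rw [Function.iterate_succ_apply', Function.iterate_succ_apply']
    refine hF n _ _ (fun p hp y hy => ?_) x hx
    rw [ih p hp m (by omega) y hy, ih p hp n hp y hy]

variable (𝒜) [DirectSum.Decomposition 𝒜]

theorem exists_linearMap_eq_on_graded (f : ℕ → M →ₗ[S] N) :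
    ∃ g : M →ₗ[S] N, ∀ n, ∀ x ∈ 𝒜 n, g x = f n x := by
  refine ⟨DirectSum.toModule S ℕ N (fun n => f n ∘ₗ (𝒜 n).subtype) ∘ₗ
    (DirectSum.decomposeLinearEquiv 𝒜).toLinearMap, fun n x hx => ?_⟩
  lift x to 𝒜 n using hx
  simp

/-- The fixed point is glued from the iterates `F^[n + 1] 0`, which are stable in degree `n`. -/
theorem exists_fixedPoint_of_degreewise (F : (M →ₗ[S] N) → (M →ₗ[S] N))
    (hF : ∀ n (g₁ g₂ : M →ₗ[S] N), (∀ p < n, ∀ x ∈ 𝒜 p, g₁ x = g₂ x) →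
      ∀ x ∈ 𝒜 n, F g₁ x = F g₂ x) :
    ∃ g, F g = g := by
  obtain ⟨g, hg⟩ := exists_linearMap_eq_on_graded 𝒜 fun n => F^[n + 1] 0
  refine ⟨g, DirectSum.decompose_lhom_ext 𝒜 fun n => LinearMap.ext fun ⟨x, hx⟩ => ?_⟩
  have hlow : ∀ p < n, ∀ y ∈ 𝒜 p, g y = F^[n] 0 y := fun p hp y hy => by
    rw [hg p y hy, iterate_apply_eq_of_degreewise hF 0 p n hp y hy]
  simp only [LinearMap.comp_apply, Submodule.subtype_apply, hg n x hx,
    Function.iterate_succ_apply']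
  exact hF n g _ hlow x hx

end GradedRecursion

open WithConv

section Convolution

theorem conv_eq_ofConv_mul (f g : H →ₗ[R] A) : conv f g = (toConv f * toConv g).ofConv := rfl

theorem convUnit_eq_ofConv_one : (convUnit : H →ₗ[R] A) = (1 : WithConv (H →ₗ[R] A)).ofConv :=
  rfl

theorem convUnit_one : (convUnit : H →ₗ[R] A) 1 = 1 := by
  simp [convUnit]

theorem conv_one_apply (f g : H →ₗ[R] A) : conv f g 1 = f 1 * g 1 := by
  simp [conv, Algebra.TensorProduct.one_def]

theorem conv_convUnit (f : H →ₗ[R] A) : conv f convUnit = f := by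
  simp [conv_eq_ofConv_mul, convUnit_eq_ofConv_one]

theorem conv_sub_left (f g h : H →ₗ[R] A) : conv (f - g) h = conv f h - conv g h := by
  simp [conv_eq_ofConv_mul, sub_mul]

theorem conv_sub_right (f g h : H →ₗ[R] A) : conv f (g - h) = conv f g - conv f h := by
  simp [conv_eq_ofConv_mul, mul_sub]

end Convolution

section Graded

variable (ℬ : ℕ → Submodule R H)

theorem eqOn_zero_of_apply_one {N : Type*} [AddCommMonoid N] [Module R N]
    (hconn : Connected ℬ) {f g : H →ₗ[R] N} (h : f 1 = g 1) : ∀ x ∈ ℬ 0, f x = g x := by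
  intro x hx
  obtain ⟨c, rfl⟩ := Submodule.mem_span_singleton.mp (hconn hx)
  rw [map_smul, map_smul, h]

variable {ℬ}

theorem conv_apply_eq_zero_of_mem (hgr : ComulGraded ℬ) {f g : H →ₗ[R] A} {n : ℕ}
    (h : ∀ p q, p + q = n → ∀ a ∈ ℬ p, ∀ b ∈ ℬ q, f a * g b = 0) {x : H} (hx : x ∈ ℬ n) :
    conv f g x = 0 := by
  suffices (⨆ (p : ℕ × ℕ) (_ : p.1 + p.2 = n),
      LinearMap.range (TensorProduct.map (ℬ p.1).subtype (ℬ p.2).subtype)) ≤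
      LinearMap.ker (LinearMap.mul' R A ∘ₗ TensorProduct.map f g) from this (hgr n x hx)
  refine iSup₂_le fun p hp => LinearMap.range_le_ker_iff.mpr <| TensorProduct.ext' ?_
  rintro ⟨a, ha⟩ ⟨b, hb⟩
  simpa using h p.1 p.2 hp a ha b hb

theorem conv_apply_congr_left (hgr : ComulGraded ℬ) {σ : H →ₗ[R] A}
    (hσ : ∀ x ∈ ℬ 0, σ x = 0) {n : ℕ} {g₁ g₂ : H →ₗ[R] A}
    (hlow : ∀ p < n, ∀ x ∈ ℬ p, g₁ x = g₂ x) {x : H} (hx : x ∈ ℬ n) :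
    conv g₁ σ x = conv g₂ σ x := by
  rw [← sub_eq_zero, ← LinearMap.sub_apply, ← conv_sub_left]
  refine conv_apply_eq_zero_of_mem hgr (fun p q hpq a ha b hb => ?_) hx
  rcases q.eq_zero_or_pos with rfl | hq
  · rw [hσ b hb, mul_zero]
  · rw [LinearMap.sub_apply, hlow p (by omega) a ha, sub_self, zero_mul]

theorem conv_apply_congr_right (hgr : ComulGraded ℬ) {σ : H →ₗ[R] A}
    (hσ : ∀ x ∈ ℬ 0, σ x = 0) {n : ℕ} {g₁ g₂ : H →ₗ[R] A}
    (hlow : ∀ p < n, ∀ x ∈ ℬ p, g₁ x = g₂ x) {x : H} (hx : x ∈ ℬ n) :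
    conv σ g₁ x = conv σ g₂ x := by
  rw [← sub_eq_zero, ← LinearMap.sub_apply, ← conv_sub_right]
  refine conv_apply_eq_zero_of_mem hgr (fun p q hpq a ha b hb => ?_) hx
  rcases p.eq_zero_or_pos with rfl | hp
  · rw [hσ a ha, zero_mul]
  · rw [LinearMap.sub_apply, hlow q (by omega) b hb, sub_self, mul_zero]

end Graded

section Birkhoff

variable (ℬ : ℕ → Submodule R H)

/-- `φ₋` solves the recursion `φ₋(x) = -P(φ(x) + ∑ φ₋(x') φ(x''))` in positive degree, written
with the full coproduct: `(φ₋ * φ)(x) - φ₋(x) = φ(x) + ∑ φ₋(x') φ(x'')` once `φ₋(1) = φ(1) = 1`. -/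
def IsBirkhoffMinus (P : A →ₗ[R] A) (φ φm : H →ₗ[R] A) : Prop :=
  φm 1 = 1 ∧ ∀ n, 0 < n → ∀ x ∈ ℬ n, φm x = -P (conv φm φ x - φm x)

variable {ℬ}

theorem isUnit_toConv_of_eqOn_zero (hgr : ComulGraded ℬ) [DirectSum.Decomposition ℬ]
    {f : H →ₗ[R] A} (hf : ∀ x ∈ ℬ 0, f x = convUnit (R := R) x) : IsUnit (toConv f) := by
  set σ := f - convUnit (R := R)
  have hσ : ∀ x ∈ ℬ 0, σ x = 0 := fun x hx => sub_eq_zero.mpr (hf x hx)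
  obtain ⟨r, hr⟩ := exists_fixedPoint_of_degreewise ℬ (fun g => convUnit - conv σ g)
    fun n g₁ g₂ hlow x hx => by
      simp only [LinearMap.sub_apply, conv_apply_congr_right hgr hσ hlow hx]
  obtain ⟨l, hl⟩ := exists_fixedPoint_of_degreewise ℬ (fun g => convUnit - conv g σ)
    fun n g₁ g₂ hlow x hx => by
      simp only [LinearMap.sub_apply, conv_apply_congr_left hgr hσ hlow hx]
  have hfσ : toConv f = 1 + toConv σ := by simp [σ, convUnit_eq_ofConv_one]
  have hfr : toConv f * toConv r = 1 := by
    have hr' : 1 - toConv σ * toConv r = toConv r := congrArg toConv hr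
    rw [hfσ, add_mul, one_mul]
    exact eq_sub_iff_add_eq.mp hr'.symm
  have hlf : toConv l * toConv f = 1 := by
    have hl' : 1 - toConv l * toConv σ = toConv l := congrArg toConv hl
    rw [hfσ, mul_add, mul_one]
    exact eq_sub_iff_add_eq.mp hl'.symm
  exact ⟨⟨toConv f, toConv r, hfr, left_inv_eq_right_inv hlf hfr ▸ hlf⟩, rfl⟩

theorem exists_isBirkhoffMinus [GradedAlgebra ℬ] (hconn : Connected ℬ) (hgr : ComulGraded ℬ)
    (P : A →ₗ[R] A) {φ : H →ₗ[R] A} (hφ : φ 1 = 1) : ∃ φm, IsBirkhoffMinus ℬ P φ φm := by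
  set ψ := φ - convUnit (R := R)
  have hψ : ∀ x ∈ ℬ 0, ψ x = 0 :=
    eqOn_zero_of_apply_one ℬ hconn (g := 0) (by simp [ψ, hφ, convUnit_one])
  obtain ⟨φm, hφm⟩ := exists_fixedPoint_of_degreewise ℬ
    (fun g => convUnit ∘ₗ GradedAlgebra.proj ℬ 0 - P ∘ₗ conv g ψ)
    fun n g₁ g₂ hlow x hx => by
      simp only [LinearMap.sub_apply, LinearMap.comp_apply,
        conv_apply_congr_left hgr hψ hlow hx]
  have hφm_apply (x : H) :
      φm x = convUnit (R := R) (GradedAlgebra.proj ℬ 0 x) - P (conv φm ψ x) :=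
    (LinearMap.congr_fun hφm x).symm
  have hone : (1 : H) ∈ ℬ 0 := SetLike.GradedOne.one_mem
  refine ⟨φm, ?_, fun n hn x hx => (hφm_apply x).trans ?_⟩
  · rw [hφm_apply, GradedAlgebra.proj_apply, DirectSum.decompose_of_mem_same ℬ hone,
      convUnit_one, conv_one_apply, hψ 1 hone, mul_zero, map_zero, sub_zero]
  · rw [GradedAlgebra.proj_apply, DirectSum.decompose_of_mem_ne ℬ hx hn.ne', map_zero,
      zero_sub, conv_sub_right, conv_convUnit, LinearMap.sub_apply]

theorem IsBirkhoffMinus.apply_conv_eq_zero [DirectSum.Decomposition ℬ] (hconn : Connected ℬ)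
    {P : A →ₗ[R] A} (hidem : P.comp P = P) (hP1 : P 1 = 0) {φ φm : H →ₗ[R] A} (hφ : φ 1 = 1)
    (h : IsBirkhoffMinus ℬ P φ φm) (x : H) : P (conv φm φ x) = 0 := by
  suffices P ∘ₗ conv φm φ = 0 from LinearMap.congr_fun this x
  refine DirectSum.decompose_lhom_ext ℬ fun n => LinearMap.ext fun ⟨x, hx⟩ => ?_
  simp only [LinearMap.comp_apply, Submodule.subtype_apply, LinearMap.zero_apply]
  rcases n.eq_zero_or_pos with rfl | hn
  · have h1 : conv φm φ 1 = (convUnit : H →ₗ[R] A) 1 := by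
      rw [conv_one_apply, h.1, hφ, convUnit_one, one_mul]
    rw [eqOn_zero_of_apply_one ℬ hconn h1 x hx]
    simp [convUnit, Algebra.algebraMap_eq_smul_one, hP1]
  · set y := conv φm φ x - φm x
    have hy : conv φm φ x = y - P y := by linear_combination h.2 n hn x hx
    rw [hy, map_sub, ← LinearMap.comp_apply P P, hidem, sub_self]

end Birkhoff

theorem birkhoff_decomposition_exists_general
    (ℬ : ℕ → Submodule R H) [GradedAlgebra ℬ]
    (hconn : Connected ℬ) (hgr : ComulGraded ℬ)
    (P : A →ₗ[R] A)
    (hidem : P.comp P = P)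
    (hker1 : (1 : A) ∈ LinearMap.ker P)
    (φ : H →ₗ[R] A) (hφ : IsCharacter φ) :
    ∃ φm φp φmi : H →ₗ[R] A,
      -- φ₋^{*-1} exists and φ = φ₋^{*-1} * φ₊
      conv φm φmi = convUnit ∧ conv φmi φm = convUnit ∧
      φ = conv φmi φp ∧
      -- equivalently φ₊ = φ₋ * φ
      φp = conv φm φ ∧
      φm 1 = 1 ∧
      -- the recursive formulas φ₋ = −P(φ̄), φ₊ = (Id − P)(φ̄)
      (∀ n : ℕ, 0 < n → ∀ x ∈ ℬ n,
        φm x = - P ((conv φm φ) x - φm x)) ∧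
      (∀ n : ℕ, 0 < n → ∀ x ∈ ℬ n,
        φp x = ((conv φm φ) x - φm x) - P ((conv φm φ) x - φm x)) ∧
      -- values of the two components
      (∀ n : ℕ, 0 < n → ∀ x ∈ ℬ n, φm x ∈ LinearMap.range P) ∧
      (∀ x : H, φp x ∈ LinearMap.ker P) := by
  obtain ⟨φm, hφm⟩ := exists_isBirkhoffMinus hconn hgr P hφ.1
  obtain ⟨u, hu⟩ := isUnit_toConv_of_eqOn_zero hgr
    (eqOn_zero_of_apply_one ℬ hconn (hφm.1.trans convUnit_one.symm))
  refine ⟨φm, conv φm φ, (↑u⁻¹ : WithConv (H →ₗ[R] A)).ofConv, ?_, ?_, ?_, rfl, hφm.1, hφm.2,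
    fun n hn x hx => ?_,
    fun n hn x hx => ⟨-(conv φm φ x - φm x), by rw [map_neg, ← hφm.2 n hn x hx]⟩,
    fun x => hφm.apply_conv_eq_zero hconn hidem (LinearMap.mem_ker.mp hker1) hφ.1 x⟩
  · simp [conv_eq_ofConv_mul, convUnit_eq_ofConv_one, ← hu]
  · simp [conv_eq_ofConv_mul, convUnit_eq_ofConv_one, ← hu]
  · simp [conv_eq_ofConv_mul, ← hu, ← mul_assoc]
  · linear_combination hφm.2 n hn x hx

theorem birkhoff_decomposition_exists
    (ℬ : ℕ → Submodule R H) [GradedAlgebra ℬ]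
    (hconn : Connected ℬ) (hgr : ComulGraded ℬ)
    (P : A →ₗ[R] A)
    (hidem : P.comp P = P)
    (hRB : ∀ a b : A, P a * P b = P (P a * b + a * P b - a * b))
    (himage : ∀ a b : A, a ∈ LinearMap.range P → b ∈ LinearMap.range P →
      a * b ∈ LinearMap.range P)
    (hker : ∀ a b : A, a ∈ LinearMap.ker P → b ∈ LinearMap.ker P →
      a * b ∈ LinearMap.ker P)
    (hker1 : (1 : A) ∈ LinearMap.ker P)
    (φ : H →ₗ[R] A) (hφ : IsCharacter φ) :
    ∃ φm φp φmi : H →ₗ[R] A,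
      -- φ₋^{*-1} exists and φ = φ₋^{*-1} * φ₊
      conv φm φmi = convUnit ∧ conv φmi φm = convUnit ∧
      φ = conv φmi φp ∧
      -- equivalently φ₊ = φ₋ * φ
      φp = conv φm φ ∧
      φm 1 = 1 ∧
      -- the recursive formulas φ₋ = −P(φ̄), φ₊ = (Id − P)(φ̄)
      (∀ n : ℕ, 0 < n → ∀ x ∈ ℬ n,
        φm x = - P ((conv φm φ) x - φm x)) ∧
      (∀ n : ℕ, 0 < n → ∀ x ∈ ℬ n,
        φp x = ((conv φm φ) x - φm x) - P ((conv φm φ) x - φm x)) ∧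
      -- values of the two components
      (∀ n : ℕ, 0 < n → ∀ x ∈ ℬ n, φm x ∈ LinearMap.range P) ∧
      (∀ x : H, φp x ∈ LinearMap.ker P) :=
  birkhoff_decomposition_exists_general ℬ hconn hgr P hidem hker1 φ hφ
end

section
/- Under the hypotheses of the Birkhoff decomposition theorem (graded connected bialgebra H, Rota–Baxter projection P on a commutative algebra A whose kernel and image are subalgebras), the Birkhoff decomposition is unique: if φ = φ_-^{*-1} * φ_+ = ψ_-^{*-1} * ψ_+ with φ_±, ψ_± characters such that φ_-, ψ_- take values in im(P) on elements of positive degree and φ_+, ψ_+ take values in ker(P), then φ_- = ψ_- and φ_+ = ψ_+. -/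
/-! The convolution `T = ψ₋ * φ₋^{*-1}` satisfies `T * φ₊ = ψ₊`. The reduced coproduct of an
element of degree `n > 0` only involves tensors of bidegrees `(i, j)` with `i, j > 0`, so the
homogeneous parts of convolutions can be controlled by induction on the degree: `φ₋^{*-1}`, hence
`T`, takes values in `im P` in positive degree, and if `T` vanishes below degree `n` then
`T x = ψ₊ x - φ₊ x ∈ ker P` for `x` of degree `n`, so `T x = 0`. Thus `T = e`, which gives
`φ₋ = ψ₋` and then `φ₊ = ψ₊`. -/

variable {R H A : Type*} [Field R] [Ring H] [Bialgebra R H]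
  [CommRing A] [Algebra R A]

open TensorProduct WithConv Coalgebra

lemma map_range_map_subtype_le {k M N V : Type*} [CommSemiring k] [AddCommMonoid M] [Module k M]
    [AddCommMonoid N] [Module k N] [AddCommMonoid V] [Module k V]
    {p : Submodule k M} {q : Submodule k N} (G : M ⊗[k] N →ₗ[k] V) {K : Submodule k V}
    (h : ∀ a ∈ p, ∀ b ∈ q, G (a ⊗ₜ b) ∈ K) :
    (LinearMap.range (map p.subtype q.subtype)).map G ≤ K := by
  rw [TensorProduct.range_map_eq_span_tmul, Submodule.map_span_le]
  rintro _ ⟨a, b, rfl⟩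
  exact h a a.2 b b.2

def properBidegree (ℬ : ℕ → Submodule R H) (n : ℕ) : Submodule R (H ⊗[R] H) :=
  ⨆ (p : ℕ × ℕ) (_ : p.1 + p.2 = n ∧ 0 < p.1 ∧ 0 < p.2),
    LinearMap.range (map (ℬ p.1).subtype (ℬ p.2).subtype)

lemma map_properBidegree_le {V : Type*} [AddCommMonoid V] [Module R V] {ℬ : ℕ → Submodule R H}
    {n : ℕ} (G : H ⊗[R] H →ₗ[R] V) {K : Submodule R V}
    (h : ∀ i j, i + j = n → 0 < i → 0 < j → ∀ a ∈ ℬ i, ∀ b ∈ ℬ j, G (a ⊗ₜ b) ∈ K) :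
    (properBidegree ℬ n).map G ≤ K := by
  simp only [properBidegree, Submodule.map_iSup, iSup_le_iff]
  rintro ⟨i, j⟩ ⟨hij, hi, hj⟩
  exact map_range_map_subtype_le G (h i j hij hi hj)

lemma exists_comul_eq {ℬ : ℕ → Submodule R H} (hconn : Connected ℬ)
    (hgr : ComulGraded ℬ) {n : ℕ} (hn : 0 < n) {x : H} (hx : x ∈ ℬ n) :
    ∃ z ∈ ℬ n, ∃ w ∈ ℬ n, ∃ y ∈ properBidegree ℬ n, comul (R := R) x = 1 ⊗ₜ z + w ⊗ₜ 1 + y := by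
  have hle : (⨆ (p : ℕ × ℕ) (_ : p.1 + p.2 = n),
        LinearMap.range (map (ℬ p.1).subtype (ℬ p.2).subtype)) ≤
      ((ℬ n).map (mk R H H 1) ⊔ (ℬ n).map ((mk R H H).flip 1)) ⊔ properBidegree ℬ n := by
    refine iSup₂_le fun p (hij : p.1 + p.2 = n) => ?_
    obtain ⟨i, j⟩ := p
    rcases Nat.eq_zero_or_pos i with rfl | hi
    · obtain rfl : j = n := by simpa using hij
      refine le_sup_of_le_left (le_sup_of_le_left ?_)
      simpa using map_range_map_subtype_le LinearMap.id fun a ha b hb => by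
        obtain ⟨c, rfl⟩ := Submodule.mem_span_singleton.mp (hconn ha)
        exact ⟨c • b, Submodule.smul_mem _ c hb, by simp [smul_tmul']⟩
    rcases Nat.eq_zero_or_pos j with rfl | hj
    · obtain rfl : i = n := by simpa using hij
      refine le_sup_of_le_left (le_sup_of_le_right ?_)
      simpa using map_range_map_subtype_le LinearMap.id fun a ha b hb => by
        obtain ⟨c, rfl⟩ := Submodule.mem_span_singleton.mp (hconn hb)
        exact ⟨c • a, Submodule.smul_mem _ c ha, by simp⟩
    · exact le_sup_of_le_right (le_iSup₂_of_le (i, j) ⟨hij, hi, hj⟩ le_rfl)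
  obtain ⟨u, hu, y, hy, hxy⟩ := Submodule.mem_sup.mp (hle (hgr n x hx))
  obtain ⟨_, ⟨z, hz, rfl⟩, _, ⟨w, hw, rfl⟩, rfl⟩ := Submodule.mem_sup.mp hu
  exact ⟨z, hz, w, hw, y, hy, hxy.symm⟩

lemma lid_map_counit_comul {M : Type*} [AddCommMonoid M] [Module R M] (g : H →ₗ[R] M) (x : H) :
    TensorProduct.lid R M (map counit g (comul x)) = g x := by
  rw [← LinearMap.lTensor_comp_rTensor, LinearMap.comp_apply, rTensor_counit_comul]
  simp

lemma rid_map_comul_counit {M : Type*} [AddCommMonoid M] [Module R M] (g : H →ₗ[R] M) (x : H) :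
    TensorProduct.rid R M (map g counit (comul x)) = g x := by
  rw [← LinearMap.rTensor_comp_lTensor, LinearMap.comp_apply, lTensor_counit_comul]
  simp

section Graded

open DirectSum

variable {ℬ : ℕ → Submodule R H} [GradedAlgebra ℬ]

lemma lid_map_counit_proj_eq_zero {n k : ℕ} (hk : k = 0 ∨ k = n) {y : H ⊗[R] H}
    (hy : y ∈ properBidegree ℬ n) :
    TensorProduct.lid R H (map counit (GradedAlgebra.proj ℬ k) y) = 0 := by
  refine (Submodule.mem_bot R).mp <| map_properBidegree_le
    ((TensorProduct.lid R H).toLinearMap ∘ₗ map counit (GradedAlgebra.proj ℬ k))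
    (fun i j hij hi _ a _ b hb => ?_) ⟨y, hy, rfl⟩
  simp [decompose_of_mem_ne ℬ hb (show j ≠ k by omega)]

lemma rid_map_proj_counit_eq_zero {n : ℕ} {y : H ⊗[R] H} (hy : y ∈ properBidegree ℬ n) :
    TensorProduct.rid R H (map (GradedAlgebra.proj ℬ n) counit y) = 0 := by
  refine (Submodule.mem_bot R).mp <| map_properBidegree_le
    ((TensorProduct.rid R H).toLinearMap ∘ₗ map (GradedAlgebra.proj ℬ n) counit)
    (fun i j hij _ hj a ha b _ => ?_) ⟨y, hy, rfl⟩
  simp [decompose_of_mem_ne ℬ ha (show i ≠ n by omega)]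

lemma comul_sub_mem_properBidegree (hconn : Connected ℬ) (hgr : ComulGraded ℬ) {n : ℕ}
    (hn : 0 < n) {x : H} (hx : x ∈ ℬ n) :
    comul (R := R) x - 1 ⊗ₜ x - x ⊗ₜ 1 ∈ properBidegree ℬ n := by
  obtain ⟨z, hz, w, hw, y, hy, hcomul⟩ := exists_comul_eq hconn hgr hn hx
  have hone : (1 : H) ∈ ℬ 0 := SetLike.GradedOne.one_mem
  have hzx : z = x := by
    have := congrArg (fun t => TensorProduct.lid R H (map counit (GradedAlgebra.proj ℬ n) t)) hcomul
    simpa [lid_map_counit_comul, lid_map_counit_proj_eq_zero (Or.inr rfl) hy,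
      decompose_of_mem_same ℬ hx, decompose_of_mem_same ℬ hz,
      decompose_of_mem_ne ℬ hone hn.ne, -decompose_one] using this.symm
  have hwx : w = x := by
    have := congrArg (fun t => TensorProduct.rid R H (map (GradedAlgebra.proj ℬ n) counit t)) hcomul
    simpa [rid_map_comul_counit, rid_map_proj_counit_eq_zero hy,
      decompose_of_mem_same ℬ hx, decompose_of_mem_same ℬ hw,
      decompose_of_mem_ne ℬ hone hn.ne, -decompose_one] using this.symm
  convert hy using 1
  rw [hcomul, hzx, hwx]
  abel

lemma counit_eq_zero_of_mem (hconn : Connected ℬ) (hgr : ComulGraded ℬ) {n : ℕ}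
    (hn : 0 < n) {x : H} (hx : x ∈ ℬ n) : counit (R := R) x = 0 := by
  obtain ⟨y, hy, hcomul⟩ : ∃ y ∈ properBidegree ℬ n, comul (R := R) x = 1 ⊗ₜ x + x ⊗ₜ 1 + y :=
    ⟨_, comul_sub_mem_properBidegree hconn hgr hn hx, by abel⟩
  have hone : (1 : H) ∈ ℬ 0 := SetLike.GradedOne.one_mem
  have hsmul : counit (R := R) x = 0 ∨ (1 : H) = 0 := by
    have := congrArg (fun t => TensorProduct.lid R H (map counit (GradedAlgebra.proj ℬ 0) t)) hcomul
    simpa [lid_map_counit_comul, decompose_of_mem_ne ℬ hx hn.ne', decompose_of_mem_same ℬ hone,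
      lid_map_counit_proj_eq_zero (Or.inl rfl) hy, -decompose_one] using this.symm
  rcases hsmul with h | h
  · exact h
  · simp [subsingleton_iff_zero_eq_one.mp h.symm |>.elim x 0]

end Graded

section Convolution

open LinearMap

lemma convMul_apply_one (f g : WithConv (H →ₗ[R] A)) : (f * g) 1 = f 1 * g 1 := by
  simp [Bialgebra.comul_one, Algebra.TensorProduct.one_def]

lemma convMul_apply_eq_add (f g : WithConv (H →ₗ[R] A)) (x : H) :
    (f * g) x = f 1 * g x + f x * g 1 +
      mul' R A (map f.ofConv g.ofConv (comul x - 1 ⊗ₜ x - x ⊗ₜ 1)) := by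
  simp [map_sub]

lemma mul'_map_mem_of_mem_properBidegree {ℬ : ℕ → Submodule R H} (f g : H →ₗ[R] A)
    {S : Submodule R A} {n : ℕ}
    (h : ∀ i j, i + j = n → 0 < i → 0 < j → ∀ a ∈ ℬ i, ∀ b ∈ ℬ j, f a * g b ∈ S)
    {y : H ⊗[R] H} (hy : y ∈ properBidegree ℬ n) : mul' R A (map f g y) ∈ S :=
  map_properBidegree_le (mul' R A ∘ₗ map f g) (by simpa using h) ⟨y, hy, rfl⟩

variable {ℬ : ℕ → Submodule R H} [GradedAlgebra ℬ]

lemma eq_one_of_apply_one_of_apply_eq_zero (hconn : Connected ℬ) (hgr : ComulGraded ℬ)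
    {T : WithConv (H →ₗ[R] A)} (hT1 : T 1 = 1) (hT : ∀ n, 0 < n → ∀ x ∈ ℬ n, T x = 0) :
    T = 1 := by
  ext x
  induction x using DirectSum.Decomposition.inductionOn ℬ with
  | zero => simp
  | @homogeneous i x =>
    obtain ⟨x, hx⟩ := x
    rcases Nat.eq_zero_or_pos i with rfl | hi
    · obtain ⟨c, rfl⟩ := Submodule.mem_span_singleton.mp (hconn hx)
      simp [hT1, Algebra.algebraMap_eq_smul_one]
    · simp [hT i hi x hx, counit_eq_zero_of_mem hconn hgr hi hx]
  | add a b ha hb => simp [ha, hb]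

lemma apply_one_of_mul_eq_one {f g : WithConv (H →ₗ[R] A)} (hfg : f * g = 1) (hf1 : f 1 = 1) :
    g 1 = 1 := by
  simpa [hf1] using (convMul_apply_one f g).symm.trans (congrArg (· 1) hfg)

lemma convMul_mapsTo (hconn : Connected ℬ) (hgr : ComulGraded ℬ) {S : NonUnitalSubalgebra R A}
    {f g : WithConv (H →ₗ[R] A)} (hf1 : f 1 = 1) (hg1 : g 1 = 1)
    (hf : ∀ n, 0 < n → Set.MapsTo f (ℬ n) S) (hg : ∀ n, 0 < n → Set.MapsTo g (ℬ n) S) :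
    ∀ n, 0 < n → Set.MapsTo (f * g) (ℬ n) S := by
  intro n hn x hx
  rw [convMul_apply_eq_add, hf1, hg1, one_mul, mul_one]
  exact add_mem (add_mem (hg n hn hx) (hf n hn hx)) <|
    mul'_map_mem_of_mem_properBidegree (S := S.toSubmodule) _ _
      (fun i j _ hi hj a ha b hb => S.mul_mem (hf i hi ha) (hg j hj hb))
      (comul_sub_mem_properBidegree hconn hgr hn hx)

lemma mapsTo_of_mul_eq_one (hconn : Connected ℬ) (hgr : ComulGraded ℬ)
    {S : NonUnitalSubalgebra R A} {f g : WithConv (H →ₗ[R] A)} (hfg : f * g = 1)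
    (hf1 : f 1 = 1) (hf : ∀ n, 0 < n → Set.MapsTo f (ℬ n) S) :
    ∀ n, 0 < n → Set.MapsTo g (ℬ n) S := by
  intro n
  induction n using Nat.strong_induction_on with
  | _ n ih =>
    intro hn x hx
    have h := convMul_apply_eq_add f g x
    rw [hfg, hf1, apply_one_of_mul_eq_one hfg hf1, one_mul, mul_one, convOne_apply,
      counit_eq_zero_of_mem hconn hgr hn hx, map_zero] at h
    rw [show g x = -f x - mul' R A (map f.ofConv g.ofConv (comul x - 1 ⊗ₜ x - x ⊗ₜ 1)) by
      linear_combination -h]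
    exact sub_mem (neg_mem (hf n hn hx)) <|
      mul'_map_mem_of_mem_properBidegree (S := S.toSubmodule) _ _
        (fun i j hij hi hj a ha b hb => S.mul_mem (hf i hi ha) (ih j (by omega) hj hb))
        (comul_sub_mem_properBidegree hconn hgr hn hx)

lemma eq_one_of_mul_eq (hconn : Connected ℬ) (hgr : ComulGraded ℬ) {S K : Submodule R A}
    (hSK : Disjoint S K) {T p q : WithConv (H →ₗ[R] A)} (hTpq : T * p = q) (hT1 : T 1 = 1)
    (hp1 : p 1 = 1) (hT : ∀ n, 0 < n → Set.MapsTo T (ℬ n) S)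
    (hp : ∀ n, 0 < n → Set.MapsTo p (ℬ n) K) (hq : ∀ n, 0 < n → Set.MapsTo q (ℬ n) K) :
    T = 1 := by
  refine eq_one_of_apply_one_of_apply_eq_zero hconn hgr hT1 fun n => ?_
  induction n using Nat.strong_induction_on with
  | _ n ih =>
    intro hn x hx
    have hmid : mul' R A (map T.ofConv p.ofConv (comul x - 1 ⊗ₜ x - x ⊗ₜ 1)) = 0 :=
      (Submodule.mem_bot R).mp <| mul'_map_mem_of_mem_properBidegree _ _
        (fun i j hij hi _ a ha _ _ => by simp [ih i (by omega) hi a ha])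
        (comul_sub_mem_properBidegree hconn hgr hn hx)
    have h := convMul_apply_eq_add T p x
    rw [hTpq, hT1, hp1, one_mul, mul_one, hmid, add_zero] at h
    refine Submodule.disjoint_def.mp hSK _ (hT n hn hx) ?_
    rw [show T x = q x - p x by linear_combination -h]
    exact sub_mem (hq n hn hx) (hp n hn hx)

end Convolution

theorem birkhoff_decomposition_unique_general
    (ℬ : ℕ → Submodule R H) [GradedAlgebra ℬ]
    (hconn : Connected ℬ) (hgr : ComulGraded ℬ)
    (P : A →ₗ[R] A)
    (hidem : P.comp P = P)
    (himage : ∀ a b : A, a ∈ LinearMap.range P → b ∈ LinearMap.range P →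
      a * b ∈ LinearMap.range P)
    (φ φm φp φmi ψm ψp ψmi : H →ₗ[R] A)
    (hφm : IsCharacter φm) (hφp : IsCharacter φp)
    (hψm : IsCharacter ψm)
    -- convolution inverses of the negative parts
    (hφi₁ : conv φm φmi = convUnit) (hφi₂ : conv φmi φm = convUnit)
    (hψi₁ : conv ψm ψmi = convUnit)
    -- the two Birkhoff decompositions of φ
    (hdec₁ : φ = conv φmi φp) (hdec₂ : φ = conv ψmi ψp)
    -- value conditions
    (hφmval : ∀ n : ℕ, 0 < n → ∀ x ∈ ℬ n, φm x ∈ LinearMap.range P)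
    (hψmval : ∀ n : ℕ, 0 < n → ∀ x ∈ ℬ n, ψm x ∈ LinearMap.range P)
    (hφpval : ∀ x : H, φp x ∈ LinearMap.ker P)
    (hψpval : ∀ x : H, ψp x ∈ LinearMap.ker P) :
    φm = ψm ∧ φp = ψp := by
  let S := (LinearMap.range P).toNonUnitalSubalgebra himage
  have hSK : Disjoint S.toSubmodule (LinearMap.ker P) :=
    (LinearMap.IsIdempotentElem.isCompl hidem).disjoint
  -- `conv` and `convUnit` are definitionally the product and unit of Mathlib's convolution ring.
  have hφinv : toConv φm * toConv φmi = 1 := congrArg toConv hφi₁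
  have hφinv' : toConv φmi * toConv φm = 1 := congrArg toConv hφi₂
  have hψinv : toConv ψm * toConv ψmi = 1 := congrArg toConv hψi₁
  have hφ₁ : toConv φ = toConv φmi * toConv φp := congrArg toConv hdec₁
  have hφ₂ : toConv φ = toConv ψmi * toConv ψp := congrArg toConv hdec₂
  have hφmi1 : φmi 1 = 1 := apply_one_of_mul_eq_one hφinv hφm.1
  have hφmi : ∀ n, 0 < n → Set.MapsTo (toConv φmi) (ℬ n) S :=
    mapsTo_of_mul_eq_one hconn hgr hφinv hφm.1 fun n hn x hx => hφmval n hn x hx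
  set T := toConv ψm * toConv φmi with hT
  have hTφp : T * toConv φp = toConv ψp := by
    rw [hT, mul_assoc, ← hφ₁, hφ₂, ← mul_assoc, hψinv, one_mul]
  have hT1 : T = 1 :=
    eq_one_of_mul_eq hconn hgr hSK hTφp (by rw [convMul_apply_one, hψm.1, hφmi1, one_mul]) hφp.1
      (convMul_mapsTo hconn hgr hψm.1 hφmi1 (fun n hn x hx => hψmval n hn x hx) hφmi)
      (fun _ _ x _ => hφpval x) (fun _ _ x _ => hψpval x)
  have hm : toConv φm = toConv ψm := by
    rw [← one_mul (toConv φm), ← hT1, hT, mul_assoc, hφinv', mul_one]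
  refine ⟨congrArg ofConv hm, congrArg ofConv ?_⟩
  rw [← one_mul (toConv φp), ← hφinv, mul_assoc, ← hφ₁, hφ₂, hm, ← mul_assoc, hψinv, one_mul]

theorem birkhoff_decomposition_unique
    (ℬ : ℕ → Submodule R H) [GradedAlgebra ℬ]
    (hconn : Connected ℬ) (hgr : ComulGraded ℬ)
    (P : A →ₗ[R] A)
    (hidem : P.comp P = P)
    (hRB : ∀ a b : A, P a * P b = P (P a * b + a * P b - a * b))
    (himage : ∀ a b : A, a ∈ LinearMap.range P → b ∈ LinearMap.range P →
      a * b ∈ LinearMap.range P)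
    (hker : ∀ a b : A, a ∈ LinearMap.ker P → b ∈ LinearMap.ker P →
      a * b ∈ LinearMap.ker P)
    (hker1 : (1 : A) ∈ LinearMap.ker P)
    (φ φm φp φmi ψm ψp ψmi : H →ₗ[R] A)
    (hφ : IsCharacter φ)
    (hφm : IsCharacter φm) (hφp : IsCharacter φp)
    (hψm : IsCharacter ψm) (hψp : IsCharacter ψp)
    -- convolution inverses of the negative parts
    (hφi₁ : conv φm φmi = convUnit) (hφi₂ : conv φmi φm = convUnit)
    (hψi₁ : conv ψm ψmi = convUnit) (hψi₂ : conv ψmi ψm = convUnit)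
    -- the two Birkhoff decompositions of φ
    (hdec₁ : φ = conv φmi φp) (hdec₂ : φ = conv ψmi ψp)
    -- value conditions
    (hφmval : ∀ n : ℕ, 0 < n → ∀ x ∈ ℬ n, φm x ∈ LinearMap.range P)
    (hψmval : ∀ n : ℕ, 0 < n → ∀ x ∈ ℬ n, ψm x ∈ LinearMap.range P)
    (hφpval : ∀ x : H, φp x ∈ LinearMap.ker P)
    (hψpval : ∀ x : H, ψp x ∈ LinearMap.ker P) :
    φm = ψm ∧ φp = ψp :=
  birkhoff_decomposition_unique_general ℬ hconn hgr P hidem himage φ φm φp φmi ψm ψp ψmi hφm hφp hψm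
    hφi₁ hφi₂ hψi₁ hdec₁ hdec₂ hφmval hψmval hφpval hψpval
end

section
/- Let Γ be a finite graph and δ a covering subgraph of Γ. There is a bijection between covering subgraphs γ of Γ containing δ and covering subgraphs γ̃ of the contracted graph Γ/δ, given by γ ↦ γ/δ; moreover under this bijection (Γ/δ)/(γ/δ) is canonically isomorphic to Γ/γ. -/
structure FinGraph where
  V : Type
  E : Type
  [fintypeV : Fintype V]
  [fintypeE : Fintype E]
  ends : E → V × V

attribute [instance] FinGraph.fintypeV FinGraph.fintypeE

namespace FinGraph

def adj (G : FinGraph) (v w : G.V) : Prop :=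
  ∃ e : G.E, G.ends e = (v, w) ∨ G.ends e = (w, v)

def components (G : FinGraph) : Type := Quot G.adj

noncomputable def subgraph (G : FinGraph) (S : Set G.E) : FinGraph :=
  { V := G.V
    E := ↥S
    fintypeV := G.fintypeV
    fintypeE := (Set.toFinite S).fintype
    ends := fun e => G.ends e.1 }

noncomputable def contract (G : FinGraph) (S : Set G.E) : FinGraph :=
  { V := (G.subgraph S).components
    E := ↥(Sᶜ)
    fintypeV := by
      classical
      have : Finite (G.subgraph S).components := Quot.finite _
      exact Fintype.ofFinite _
    fintypeE := (Set.toFinite Sᶜ).fintype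
    ends := fun e =>
      (Quot.mk (G.subgraph S).adj (G.ends e.1).1,
       Quot.mk (G.subgraph S).adj (G.ends e.1).2) }

structure GraphIso (G G' : FinGraph) where
  vEquiv : G.V ≃ G'.V
  eEquiv : G.E ≃ G'.E
  ends_comm : ∀ e : G.E,
    G'.ends (eEquiv e) = (vEquiv (G.ends e).1, vEquiv (G.ends e).2)

/-! Contracting `δ` and then `γ/δ` identifies two vertices of `Γ` exactly when they are joined
by a path in `γ`: every edge of `γ` either lies in `δ`, and is contracted in the first step, or
survives as an edge of `γ/δ`, and is contracted in the second. So both sides have the same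
vertices, and their edges are, in both cases, the edges of `Γ` outside `γ`. -/

theorem _root_.Set.bijective_preimage_val_compl {α : Type*} (D : Set α) :
    Function.Bijective (fun S : {S : Set α // D ⊆ S} => {e : ↥Dᶜ | (e : α) ∈ S.1}) := by
  refine ⟨fun ⟨S, hS⟩ ⟨S', hS'⟩ h => ?_, fun U => ⟨⟨D ∪ (↑) '' U, Set.subset_union_left⟩, ?_⟩⟩
  · rw [Subtype.mk.injEq]
    ext e
    by_cases hD : e ∈ D
    · simp [hS hD, hS' hD]
    · exact Set.ext_iff.mp h ⟨e, hD⟩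
  · ext ⟨e, he⟩
    simp [show e ∉ D from he]

def componentsLift (G : FinGraph) {β : Sort*} (f : G.V → β)
    (hf : ∀ e, f (G.ends e).1 = f (G.ends e).2) : G.components → β :=
  Quot.lift f fun v w ⟨e, he⟩ => by
    rcases he with he | he
    · simpa [he] using hf e
    · simpa [he] using (hf e).symm

theorem mk_ends_fst_eq_mk_ends_snd (G : FinGraph) (e : G.E) :
    (Quot.mk G.adj (G.ends e).1 : G.components) = Quot.mk G.adj (G.ends e).2 :=
  Quot.sound ⟨e, Or.inl rfl⟩

section Transitivity

variable (G : FinGraph) {D S : Set G.E}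

noncomputable def contractContractVEquiv (hDS : D ⊆ S) :
    ((G.contract D).contract {e : ↥(Dᶜ) | (e : G.E) ∈ S}).V ≃ (G.contract S).V where
  toFun := componentsLift _
    (componentsLift _ (Quot.mk _) fun e =>
      (G.subgraph S).mk_ends_fst_eq_mk_ends_snd ⟨e.1, hDS e.2⟩)
    fun e => (G.subgraph S).mk_ends_fst_eq_mk_ends_snd ⟨e.1.1, e.2⟩
  invFun := componentsLift _ (fun v => Quot.mk _ (Quot.mk _ v)) fun e => by
    by_cases hD : e.1 ∈ D
    · exact congrArg _ ((G.subgraph D).mk_ends_fst_eq_mk_ends_snd ⟨e.1, hD⟩)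
    · exact ((G.contract D).subgraph _).mk_ends_fst_eq_mk_ends_snd ⟨⟨e.1, hD⟩, e.2⟩
  left_inv := by
    rintro ⟨⟨v⟩⟩
    rfl
  right_inv := by
    rintro ⟨v⟩
    rfl

def contractContractEEquiv (hDS : D ⊆ S) :
    ((G.contract D).contract {e : ↥(Dᶜ) | (e : G.E) ∈ S}).E ≃ (G.contract S).E :=
  Equiv.subtypeSubtypeEquivSubtype (p := (· ∉ D)) (q := (· ∉ S)) fun he hD => he (hDS hD)

noncomputable def contractContractIso (hDS : D ⊆ S) :
    GraphIso ((G.contract D).contract {e : ↥(Dᶜ) | (e : G.E) ∈ S}) (G.contract S) where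
  vEquiv := G.contractContractVEquiv hDS
  eEquiv := G.contractContractEEquiv hDS
  ends_comm _ := rfl

end Transitivity

/-- Covering subgraphs of `Γ` are identified with subsets of the internal edges; the
map `γ ↦ γ/δ` sends a covering subgraph containing `δ` (a set `S ⊇ D`) to the
corresponding set of edges of the contraction `Γ/δ`. -/
theorem contraction_bijection_and_transitivity (G : FinGraph) (D : Set G.E) :
    Function.Bijective
      (fun S : {S : Set G.E // D ⊆ S} =>
        ({e : ↥(Dᶜ) | (e : G.E) ∈ S.1} : Set (G.contract D).E)) ∧
    ∀ S : Set G.E, D ⊆ S →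
      Nonempty (GraphIso
        ((G.contract D).contract {e : ↥(Dᶜ) | (e : G.E) ∈ S})
        (G.contract S)) :=
  ⟨D.bijective_preimage_val_compl, fun _ hDS => ⟨G.contractContractIso hDS⟩⟩

end FinGraph
end
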